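/- arXiv:2005.06277 — 2 statements merged into one kernel-verified Lean document; each statement's English description precedes it below -/
import Mathlib

section
/- Let X₁, X₂, … be independent real random variables such that E[Xᵢ] = 0, E[Xᵢ²] ≤ σᵢ², and Xᵢ ≤ b almost surely for all i ∈ ℕ, where b > 0. Define Sₙ = Σ_{i=1}^{n} Xᵢ, νₙ = (1/n) Σ_{i=1}^{n} σᵢ², and 𝒱(s, n) = n·ln[ (b²/(b² + νₙ))·exp(−(νₙ/b)s) + (νₙ/(b² + νₙ))·e^{b s} ] for s ∈ ℝ, n ∈ ℕ. Let m be a positive integer with νₘ > 0 and let 0 < ε < b. Set ζ = (b/(b² + νₘ))·ln( (1 + εb/νₘ)/(1 − ε/b) ). Then Pr{ ∃ n ∈ ℕ, ζ(Sₙ − m ε) − 𝒱(ζ, n) + 𝒱(ζ, m) ≥ 0 } ≤ [ (1 + bε/νₘ)^{−(νₘ + bε)/(b² + νₘ)} · (1 − ε/b)^{−(b² − bε)/(b² + νₘ)} ]^m. -/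
/-!
For `x ≤ b`, `exp (ζ x)` lies below a parabola in `x` (Bennett's parabola), so for a mean-zero
`Xᵢ ≤ b` with `E[Xᵢ²] ≤ σᵢ²` the factor `Yᵢ = exp (ζ Xᵢ) / F(σᵢ²)` has mean at most one, where
`F(v) = bennettMGF b v ζ` is the moment generating function of the extremal two-point law.
The partial products of the independent `Yᵢ` form a nonnegative supermartingale started at `1`,
so by Ville's maximal inequality they ever exceed `t` with probability at most `1 / t`.
Since `v ↦ log F(v)` is concave, Jensen's inequality gives `∏_{i<n} F(σᵢ²) ≤ F(νₙ)ⁿ = exp 𝒱(ζ, n)`,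
so the event of the theorem forces `∏_{i<n} Yᵢ ≥ exp (ζ m ε - 𝒱(ζ, m))`. Finally `ζ` is the
minimiser of `F(νₘ) e^{-ζε}`, and its minimum value gives the closed form of the bound.
-/

open MeasureTheory ProbabilityTheory Real Finset
open scoped ENNReal

lemma exp_le_quadratic_of_nonpos {t : ℝ} (ht : t ≤ 0) : exp t ≤ 1 + t + t ^ 2 / 2 := by
  have hanti : Antitone fun x : ℝ => 1 + x + x ^ 2 / 2 - exp x := by
    refine antitone_of_hasDerivAt_nonpos (f' := fun x => 1 + x - exp x) (fun x => ?_)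
      fun x => show 1 + x - exp x ≤ 0 by linarith [add_one_le_exp x]
    refine ((((hasDerivAt_id x).const_add 1).add ((hasDerivAt_pow 2 x).div_const 2)).sub
      (hasDerivAt_exp x)).congr_deriv ?_
    simp
  simpa using hanti ht

lemma sub_two_mul_exp_add_add_two_nonneg {x : ℝ} (hx : 0 ≤ x) :
    0 ≤ (x - 2) * exp x + x + 2 := by
  have hmono : Monotone fun x : ℝ => (x - 2) * exp x + x + 2 := by
    refine monotone_of_hasDerivAt_nonneg (f' := fun x => (x - 1) * exp x + 1) (fun x => ?_)
      (fun x => ?_)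
    · refine (((((hasDerivAt_id x).sub_const 2).mul (hasDerivAt_exp x)).add
        (hasDerivAt_id x)).add_const 2).congr_deriv ?_
      simp only [id_eq]
      ring
    · have h1 := add_one_le_exp (-x)
      have h2 : exp (-x) * exp x = 1 := by rw [← exp_add]; simp
      show 0 ≤ (x - 1) * exp x + 1
      nlinarith [exp_pos x]
  simpa using hmono hx

lemma monotoneOn_exp_sub_one_sub_div_sq :
    MonotoneOn (fun x => (exp x - 1 - x) / x ^ 2) (Set.Ioi 0) := by
  refine monotoneOn_of_hasDerivWithinAt_nonneg (convex_Ioi 0)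
    (f' := fun x => x * ((x - 2) * exp x + x + 2) / (x ^ 2) ^ 2) ?_ (fun x hx => ?_)
    (fun x hx => ?_)
  · exact ContinuousOn.div (by fun_prop) (by fun_prop) fun x hx => pow_ne_zero 2 (ne_of_gt hx)
  · rw [interior_Ioi] at hx ⊢
    refine HasDerivAt.hasDerivWithinAt ?_
    refine ((((hasDerivAt_exp x).sub_const 1).sub (hasDerivAt_id x)).div
      (hasDerivAt_pow 2 x) (pow_ne_zero 2 (ne_of_gt hx))).congr_deriv ?_
    simp only [id_eq, Pi.sub_apply]
    ring
  · rw [interior_Ioi] at hx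
    have := sub_two_mul_exp_add_add_two_nonneg (le_of_lt hx)
    exact div_nonneg (mul_nonneg hx.le this) (by positivity)

/-- Bennett's parabola: tangent to `exp` at `0` and passing through `(T, exp T)`. -/
lemma exp_le_quadratic_of_le {u T : ℝ} (huT : u ≤ T) (hT : 0 < T) :
    exp u ≤ 1 + u + (exp T - 1 - T) / T ^ 2 * u ^ 2 := by
  rcases le_or_gt u 0 with hu | hu
  · have : 1 / 2 ≤ (exp T - 1 - T) / T ^ 2 := by
      rw [le_div_iff₀ (by positivity)]
      linarith [quadratic_le_exp_of_nonneg hT.le]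
    nlinarith [exp_le_quadratic_of_nonpos hu, sq_nonneg u]
  · have h := monotoneOn_exp_sub_one_sub_div_sq hu (hu.trans_le huT) huT
    rw [div_le_iff₀ (by positivity)] at h
    linarith

/-- The moment generating function, at `s`, of the mean-zero law on `{-v / b, b}` with
variance `v`. -/
noncomputable def bennettMGF (b v s : ℝ) : ℝ :=
  b ^ 2 / (b ^ 2 + v) * exp (-(v / b) * s) + v / (b ^ 2 + v) * exp (b * s)

lemma bennettMGF_pos {b v : ℝ} (hb : 0 < b) (hv : 0 ≤ v) (s : ℝ) : 0 < bennettMGF b v s := by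
  unfold bennettMGF
  positivity

lemma integrable_exp_mul_of_ae_le {Ω : Type*} [MeasurableSpace Ω] {P : Measure Ω}
    [IsFiniteMeasure P] {Z : Ω → ℝ} (hZ : AEStronglyMeasurable Z P) {b s : ℝ}
    (hbd : ∀ᵐ ω ∂P, Z ω ≤ b) (hs : 0 ≤ s) : Integrable (fun ω => exp (s * Z ω)) P := by
  refine (integrable_const (exp (s * b))).mono' (by fun_prop) (hbd.mono fun ω hω => ?_)
  rw [norm_of_nonneg (exp_pos _).le]
  gcongr

theorem integral_exp_mul_le_bennettMGF {Ω : Type*} [MeasurableSpace Ω] {P : Measure Ω}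
    [IsProbabilityMeasure P] {Z : Ω → ℝ} (hZ : Integrable Z P) (hmean : ∫ ω, Z ω ∂P = 0)
    (hZ2 : Integrable (fun ω => Z ω ^ 2) P) {b v s : ℝ} (hvar : ∫ ω, Z ω ^ 2 ∂P ≤ v)
    (hb : 0 < b) (hbd : ∀ᵐ ω ∂P, Z ω ≤ b) (hs : 0 < s) :
    ∫ ω, exp (s * Z ω) ∂P ≤ bennettMGF b v s := by
  have hv : 0 ≤ v := (integral_nonneg fun ω => sq_nonneg (Z ω)).trans hvar
  set T := s * (b ^ 2 + v) / b with hT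
  set c := (exp T - 1 - T) / T ^ 2 with hc
  set E := exp (-(v / b) * s) with hE
  have hTpos : 0 < T := by positivity
  have hc0 : 0 ≤ c := by
    have := quadratic_le_exp_of_nonneg hTpos.le
    exact div_nonneg (by nlinarith [sq_nonneg T]) (sq_nonneg T)
  -- the parabola of `exp_le_quadratic_of_le` at `u = s (z + v / b)`, expanded in powers of `z`
  have hparabola : ∀ z, z ≤ b → exp (s * z) ≤
      E * (1 + s * v / b + c * s ^ 2 * v ^ 2 / b ^ 2) + E * (s + 2 * c * s ^ 2 * v / b) * z
        + E * c * s ^ 2 * z ^ 2 := by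
    intro z hz
    have hu : s * (z + v / b) ≤ T := by
      rw [hT, mul_div_assoc, add_div, pow_two, mul_self_div_self]
      gcongr
    have hsplit : exp (s * z) = E * exp (s * (z + v / b)) := by
      rw [hE, ← exp_add]; congr 1; ring
    rw [hsplit]
    calc E * exp (s * (z + v / b)) ≤ E * (1 + s * (z + v / b) + c * (s * (z + v / b)) ^ 2) :=
          mul_le_mul_of_nonneg_left (exp_le_quadratic_of_le hu hTpos) (exp_pos _).le
      _ = _ := by field_simp; ring
  have hexp_int := integrable_exp_mul_of_ae_le hZ.1 hbd hs.le
  have hlin : Integrable (fun ω => E * (1 + s * v / b + c * s ^ 2 * v ^ 2 / b ^ 2)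
      + E * (s + 2 * c * s ^ 2 * v / b) * Z ω) P := (integrable_const _).add (hZ.const_mul _)
  calc ∫ ω, exp (s * Z ω) ∂P
      ≤ ∫ ω, E * (1 + s * v / b + c * s ^ 2 * v ^ 2 / b ^ 2)
          + E * (s + 2 * c * s ^ 2 * v / b) * Z ω + E * c * s ^ 2 * Z ω ^ 2 ∂P :=
        integral_mono_ae hexp_int (hlin.add (hZ2.const_mul _)) <|
          hbd.mono fun ω hω => hparabola _ hω
    _ = E * (1 + s * v / b + c * s ^ 2 * v ^ 2 / b ^ 2) + E * c * s ^ 2 * ∫ ω, Z ω ^ 2 ∂P := by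
        rw [integral_add hlin (hZ2.const_mul _), integral_add (integrable_const _)
          (hZ.const_mul _), integral_const_mul, integral_const_mul, integral_const_mul, hmean]
        simp
    _ ≤ E * (1 + s * v / b + c * s ^ 2 * v ^ 2 / b ^ 2) + E * c * s ^ 2 * v := by
        gcongr
    _ = bennettMGF b v s := by
        have hET : exp (b * s) = E * exp T := by
          rw [hE, hT, ← exp_add]; congr 1; field_simp; ring
        rw [bennettMGF, ← hE, hET, hc, hT]
        field_simp
        ring

lemma lintegral_ofReal_exp_mul_div_bennettMGF_le_one {Ω : Type*} [MeasurableSpace Ω]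
    {P : Measure Ω} [IsProbabilityMeasure P] {Z : Ω → ℝ} (hZ : Integrable Z P)
    (hmean : ∫ ω, Z ω ∂P = 0) (hZ2 : Integrable (fun ω => Z ω ^ 2) P) {b v s : ℝ}
    (hvar : ∫ ω, Z ω ^ 2 ∂P ≤ v) (hb : 0 < b) (hbd : ∀ᵐ ω ∂P, Z ω ≤ b) (hs : 0 < s) :
    ∫⁻ ω, ENNReal.ofReal (exp (s * Z ω) / bennettMGF b v s) ∂P ≤ 1 := by
  have hF := bennettMGF_pos hb ((integral_nonneg fun ω => sq_nonneg (Z ω)).trans hvar) s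
  rw [← ofReal_integral_eq_lintegral_ofReal
    ((integrable_exp_mul_of_ae_le hZ.1 hbd hs.le).div_const _)
    (ae_of_all _ fun ω => by positivity), ← ENNReal.ofReal_one, integral_div]
  exact ENNReal.ofReal_le_ofReal ((div_le_one hF).2
    (integral_exp_mul_le_bennettMGF hZ hmean hZ2 hvar hb hbd hs))

/-- With `N v = b² e^{-vs/b} + v e^{bs}` (so that `bennettMGF b v s = N v / (b² + v)`), this is
`(log N)'' ≤ (log (b² + v))''`. Writing `τ = s (b² + v) / b` and `r = e^{-τ}`, the difference of
the two sides is `e^{2bs} b² (b² (1 - r² - 2τr) + v (2 - 2r - 2τr - τ²r))`, and both brackets are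
nonnegative because `sinh τ ≥ τ` and `e^τ ≥ 1 + τ + τ²/2`. -/
lemma bennett_log_concavity_key {b s v : ℝ} (hb : 0 < b) (hs : 0 < s) (hv : 0 ≤ v) :
    (b ^ 2 * exp (-(v / b) * s) + v * exp (b * s)) ^ 2 ≤
      ((-(b * s) * exp (-(v / b) * s) + exp (b * s)) ^ 2
        - s ^ 2 * exp (-(v / b) * s) * (b ^ 2 * exp (-(v / b) * s) + v * exp (b * s)))
        * (b ^ 2 + v) ^ 2 := by
  set τ := s * (b ^ 2 + v) / b with hτ
  set r := exp (-τ) with hr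
  have hτpos : 0 < τ := by positivity
  have hrpos : 0 < r := exp_pos _
  have hmul : exp τ * r = 1 := by rw [hr, ← exp_add]; simp
  have hEr : exp (-(v / b) * s) = exp (b * s) * r := by
    rw [hr, ← exp_add]; congr 1; rw [hτ]; field_simp; ring
  have hsinh : 0 ≤ 1 - r ^ 2 - 2 * τ * r := by
    have h := self_lt_sinh_iff.2 hτpos
    rw [sinh_eq] at h
    nlinarith [mul_lt_mul_of_pos_right h hrpos]
  have hquad : 0 ≤ 2 - 2 * r - 2 * τ * r - τ ^ 2 * r := by
    nlinarith [mul_le_mul_of_nonneg_right (quadratic_le_exp_of_nonneg hτpos.le) hrpos.le]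
  have hs_eq : s = τ * b / (b ^ 2 + v) := by rw [hτ]; field_simp
  have hfactor : ((-(b * s) * exp (-(v / b) * s) + exp (b * s)) ^ 2
        - s ^ 2 * exp (-(v / b) * s) * (b ^ 2 * exp (-(v / b) * s) + v * exp (b * s)))
        * (b ^ 2 + v) ^ 2 - (b ^ 2 * exp (-(v / b) * s) + v * exp (b * s)) ^ 2
      = exp (b * s) ^ 2 * b ^ 2 * (b ^ 2 * (1 - r ^ 2 - 2 * τ * r)
          + v * (2 - 2 * r - 2 * τ * r - τ ^ 2 * r)) := by
    rw [hEr, hs_eq]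
    field_simp
    ring
  have : 0 ≤ exp (b * s) ^ 2 * b ^ 2 * (b ^ 2 * (1 - r ^ 2 - 2 * τ * r)
      + v * (2 - 2 * r - 2 * τ * r - τ ^ 2 * r)) := by positivity
  linarith

lemma concaveOn_log_bennettMGF {b s : ℝ} (hb : 0 < b) (hs : 0 < s) :
    ConcaveOn ℝ (Set.Ici 0) fun v => log (bennettMGF b v s) := by
  set N : ℝ → ℝ := fun v => b ^ 2 * exp (-(v / b) * s) + v * exp (b * s) with hN
  set N' : ℝ → ℝ := fun v => -(b * s) * exp (-(v / b) * s) + exp (b * s) with hN'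
  have hNpos : ∀ v, 0 ≤ v → 0 < N v := fun v hv => by positivity
  have hDpos : ∀ v : ℝ, 0 ≤ v → 0 < b ^ 2 + v := fun v hv => by positivity
  have hlin : ∀ v, HasDerivAt (fun v : ℝ => -(v / b) * s) (-(s / b)) v := fun v =>
    (((hasDerivAt_id v).div_const b).neg.mul_const s).congr_deriv (by ring)
  have hexp : ∀ v, HasDerivAt (fun v => exp (-(v / b) * s)) (-(s / b) * exp (-(v / b) * s)) v :=
    fun v => (hlin v).exp.congr_deriv (by ring)
  have hNderiv : ∀ v, HasDerivAt N (N' v) v := fun v =>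
    (((hexp v).const_mul (b ^ 2)).add ((hasDerivAt_id v).mul_const (exp (b * s)))).congr_deriv
      (by simp only [hN']; field_simp)
  have hN'deriv : ∀ v, HasDerivAt N' (s ^ 2 * exp (-(v / b) * s)) v := fun v =>
    (((hexp v).const_mul (-(b * s))).add_const (exp (b * s))).congr_deriv (by field_simp)
  have hlogD : ∀ v, 0 ≤ v → HasDerivAt (fun v => log (b ^ 2 + v)) (b ^ 2 + v)⁻¹ v :=
    fun v hv => by
      simpa using ((hasDerivAt_id v).const_add (b ^ 2)).log (hDpos v hv).ne'
  have hinvD : ∀ v, 0 ≤ v → HasDerivAt (fun v => (b ^ 2 + v)⁻¹) (-((b ^ 2 + v) ^ 2)⁻¹) v :=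
    fun v hv => (((hasDerivAt_id v).const_add (b ^ 2)).inv (hDpos v hv).ne').congr_deriv
      (by simp only [id_eq]; ring)
  have hconc : ConcaveOn ℝ (Set.Ici 0) fun v => log (N v) - log (b ^ 2 + v) := by
    refine concaveOn_of_hasDerivWithinAt2_nonpos (convex_Ici 0)
      (f' := fun v => N' v / N v - (b ^ 2 + v)⁻¹)
      (f'' := fun v => (s ^ 2 * exp (-(v / b) * s) * N v - N' v ^ 2) / N v ^ 2
        + ((b ^ 2 + v) ^ 2)⁻¹) ?_ (fun v hv => ?_) (fun v hv => ?_) (fun v hv => ?_)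
    · exact fun v hv => (((hNderiv v).log (hNpos v hv).ne').sub
        (hlogD v hv)).continuousAt.continuousWithinAt
    · rw [interior_Ici] at hv
      exact (((hNderiv v).log (hNpos v hv.le).ne').sub (hlogD v hv.le)).hasDerivWithinAt
    · rw [interior_Ici] at hv
      exact ((((hN'deriv v).div (hNderiv v) (hNpos v hv.le).ne').sub
        (hinvD v hv.le)).congr_deriv (by ring)).hasDerivWithinAt
    · rw [interior_Ici] at hv
      have key : N v ^ 2 ≤ (N' v ^ 2 - s ^ 2 * exp (-(v / b) * s) * N v) * (b ^ 2 + v) ^ 2 :=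
        bennett_log_concavity_key hb hs hv.le
      have hN0 := (hNpos v hv.le).ne'
      have hD0 := (hDpos v hv.le).ne'
      have : (s ^ 2 * exp (-(v / b) * s) * N v - N' v ^ 2) / N v ^ 2 + ((b ^ 2 + v) ^ 2)⁻¹
          = ((s ^ 2 * exp (-(v / b) * s) * N v - N' v ^ 2) * (b ^ 2 + v) ^ 2 + N v ^ 2)
            / (N v ^ 2 * (b ^ 2 + v) ^ 2) := by
        field_simp
      rw [this]
      exact div_nonpos_of_nonpos_of_nonneg (by linarith) (by positivity)
  refine hconc.congr fun v hv => ?_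
  have : bennettMGF b v s = N v / (b ^ 2 + v) := by
    simp only [bennettMGF, hN]
    field_simp
  rw [this, log_div (hNpos v hv).ne' (hDpos v hv).ne']

lemma prod_le_pow_of_concaveOn_log {D : Set ℝ} {f : ℝ → ℝ}
    (hf : ConcaveOn ℝ D fun x => log (f x)) (hpos : ∀ x ∈ D, 0 < f x) {ι : Type*}
    (s : Finset ι) {p : ι → ℝ} (hp : ∀ i ∈ s, p i ∈ D) :
    ∏ i ∈ s, f (p i) ≤ f ((∑ i ∈ s, p i) / #s) ^ #s := by
  rcases s.eq_empty_or_nonempty with rfl | hs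
  · simp
  have hn : (0 : ℝ) < #s := by exact_mod_cast hs.card_pos
  have hw : ∑ _i ∈ s, (#s : ℝ)⁻¹ = 1 := by simp [hn.ne']
  have hmean : ∑ i ∈ s, (#s : ℝ)⁻¹ • p i = (∑ i ∈ s, p i) / #s := by
    simp only [smul_eq_mul, ← Finset.mul_sum]; ring
  have hjensen := hf.le_map_sum (fun _ _ => inv_nonneg.2 hn.le) hw hp
  rw [hmean] at hjensen
  simp only [smul_eq_mul, ← Finset.mul_sum] at hjensen
  have hmem : (∑ i ∈ s, p i) / #s ∈ D := hmean ▸ hf.1.sum_mem (fun _ _ => inv_nonneg.2 hn.le) hw hp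
  calc ∏ i ∈ s, f (p i) = exp (∑ i ∈ s, log (f (p i))) := by
        rw [exp_sum]
        exact Finset.prod_congr rfl fun i hi => (exp_log (hpos _ (hp i hi))).symm
    _ ≤ exp (#s * log (f ((∑ i ∈ s, p i) / #s))) := by
        gcongr
        rwa [inv_mul_le_iff₀ hn] at hjensen
    _ = f ((∑ i ∈ s, p i) / #s) ^ #s := by
        rw [exp_nat_mul, exp_log (hpos _ hmem)]

lemma exp_mul_sum_sub_le_prod_div {b s : ℝ} (hb : 0 < b) (hs : 0 < s) (σ x : ℕ → ℝ) (n : ℕ) :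
    exp (s * ∑ i ∈ range n, x i - n * log (bennettMGF b ((∑ i ∈ range n, σ i ^ 2) / n) s))
      ≤ ∏ i ∈ range n, exp (s * x i) / bennettMGF b (σ i ^ 2) s := by
  have hjensen := prod_le_pow_of_concaveOn_log (concaveOn_log_bennettMGF hb hs)
    (fun v hv => bennettMGF_pos hb hv s) (range n) (p := fun i => σ i ^ 2)
    fun i _ => sq_nonneg (σ i)
  rw [card_range] at hjensen
  have hmean := bennettMGF_pos hb (by positivity : 0 ≤ (∑ i ∈ range n, σ i ^ 2) / n) s
  rw [prod_div_distrib, ← exp_sum, ← mul_sum, exp_sub, exp_nat_mul, exp_log hmean]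
  exact div_le_div_of_nonneg_left (exp_pos _).le
    (prod_pos fun i _ => bennettMGF_pos hb (sq_nonneg _) s) hjensen

/-- The value of the Chernoff bound `bennettMGF b v ζ · e^{-ζε}` at its minimiser `ζ`. -/
lemma bennettMGF_mul_exp_neg_mul_eq {b v ε ζ : ℝ} (hb : 0 < b) (hv : 0 < v) (hε : 0 < ε)
    (hεb : ε < b) (hζ : ζ = b / (b ^ 2 + v) * log ((1 + ε * b / v) / (1 - ε / b))) :
    bennettMGF b v ζ * exp (-(ζ * ε))
      = (1 + b * ε / v) ^ (-((v + b * ε) / (b ^ 2 + v)))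
        * (1 - ε / b) ^ (-((b ^ 2 - b * ε) / (b ^ 2 + v))) := by
  have hp : 0 < 1 + b * ε / v := by positivity
  have hq : 0 < 1 - ε / b := by rw [sub_pos, div_lt_one hb]; exact hεb
  have hζ' : ζ = b / (b ^ 2 + v) * (log (1 + b * ε / v) - log (1 - ε / b)) := by
    rw [hζ, ← log_div hp.ne' hq.ne', mul_comm ε b]
  have hexp : exp (b * ζ) = exp (-(v / b) * ζ) * ((1 + b * ε / v) / (1 - ε / b)) := by
    rw [← exp_log (div_pos hp hq), ← exp_add, log_div hp.ne' hq.ne', hζ']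
    congr 1
    field_simp
    ring
  have hF : bennettMGF b v ζ = exp (-(v / b) * ζ) / (1 - ε / b) := by
    have hbε : b - ε ≠ 0 := (sub_pos.2 hεb).ne'
    rw [bennettMGF, hexp]
    field_simp
    ring
  rw [hF, rpow_def_of_pos hp, rpow_def_of_pos hq, ← exp_log hq, ← exp_sub, ← exp_add,
    ← exp_add, log_exp, hζ']
  congr 1
  field_simp
  ring

section Ville

variable {Ω : Type*} {Y : ℕ → Ω → ℝ≥0∞}

abbrev pastSigma (Y : ℕ → Ω → ℝ≥0∞) (n : ℕ) : MeasurableSpace Ω :=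
  ⨆ i < n, MeasurableSpace.comap (Y i) inferInstance

lemma measurable_pastSigma_prod {k n : ℕ} (hk : k ≤ n) :
    Measurable[pastSigma Y n] fun ω => ∏ i ∈ range k, Y i ω :=
  Finset.measurable_prod _ fun i hi => (comap_measurable (Y i)).mono
    (le_iSup₂ (f := fun i (_ : i < n) => MeasurableSpace.comap (Y i) inferInstance) i
      ((Finset.mem_range.1 hi).trans_le hk)) le_rfl

def belowBefore (Y : ℕ → Ω → ℝ≥0∞) (t : ℝ≥0∞) (n : ℕ) : Set Ω :=
  {ω | ∀ k < n, ∏ i ∈ range k, Y i ω < t}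

lemma measurableSet_belowBefore_succ (t : ℝ≥0∞) (n : ℕ) :
    MeasurableSet[pastSigma Y n] (belowBefore Y t (n + 1)) := by
  simp only [belowBefore, Set.ofPred_forall]
  exact MeasurableSet.iInter fun k => MeasurableSet.iInter fun hk =>
    measurableSet_lt (measurable_pastSigma_prod (Nat.lt_succ_iff.1 hk)) measurable_const

lemma belowBefore_succ (t : ℝ≥0∞) (n : ℕ) :
    belowBefore Y t (n + 1) = belowBefore Y t n \ {ω | t ≤ ∏ i ∈ range n, Y i ω} := by
  ext ω
  simp only [belowBefore, Set.mem_sdiff, Set.mem_ofPred_eq, not_le, Nat.lt_succ_iff_lt_or_eq,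
    or_imp, forall_and, forall_eq]

variable [mΩ : MeasurableSpace Ω] {P : Measure Ω}

lemma pastSigma_le (hYm : ∀ i, Measurable (Y i)) (n : ℕ) : pastSigma Y n ≤ mΩ :=
  iSup₂_le fun i _ => (hYm i).comap_le

lemma lintegral_mul_eq_of_measurable_pastSigma (hY : iIndepFun Y P)
    (hYm : ∀ i, Measurable (Y i)) {n : ℕ} {f : Ω → ℝ≥0∞} (hf : Measurable[pastSigma Y n] f) :
    ∫⁻ ω, f ω * Y n ω ∂P = (∫⁻ ω, f ω ∂P) * ∫⁻ ω, Y n ω ∂P := by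
  have hindep := indep_iSup_of_disjoint (fun i => (hYm i).comap_le)
    ((iIndepFun_iff_iIndep _ _ _).1 hY) (S := Set.Iio n) (T := {n}) (by simp)
  simp only [Set.mem_Iio, Set.mem_singleton_iff, iSup_iSup_eq_left] at hindep
  exact lintegral_mul_eq_lintegral_mul_lintegral_of_independent_measurableSpace
    (pastSigma_le hYm n) (hYm n).comap_le hindep hf (comap_measurable (Y n))

lemma setLIntegral_prod_succ_le (hY : iIndepFun Y P) (hYm : ∀ i, Measurable (Y i))
    (hY1 : ∀ i, ∫⁻ ω, Y i ω ∂P ≤ 1) (t : ℝ≥0∞) (n : ℕ) :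
    ∫⁻ ω in belowBefore Y t (n + 1), ∏ i ∈ range (n + 1), Y i ω ∂P
      ≤ ∫⁻ ω in belowBefore Y t (n + 1), ∏ i ∈ range n, Y i ω ∂P := by
  have hB := measurableSet_belowBefore_succ (Y := Y) t n
  rw [← lintegral_indicator (pastSigma_le hYm n _ hB),
    ← lintegral_indicator (pastSigma_le hYm n _ hB)]
  have hsplit : (belowBefore Y t (n + 1)).indicator (fun ω => ∏ i ∈ range (n + 1), Y i ω)
      = fun ω => (belowBefore Y t (n + 1)).indicator (fun ω => ∏ i ∈ range n, Y i ω) ω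
        * Y n ω := by
    ext ω
    by_cases hω : ω ∈ belowBefore Y t (n + 1) <;> simp [hω, prod_range_succ]
  rw [hsplit, lintegral_mul_eq_of_measurable_pastSigma hY hYm
    ((measurable_pastSigma_prod le_rfl).indicator hB)]
  exact mul_le_of_le_one_right' (hY1 n)

/-- Optional stopping for the product martingale `∏_{i<n} Y i`, stopped when it first
reaches `t`. -/
lemma sum_setLIntegral_firstHit_add_le [IsProbabilityMeasure P] (hY : iIndepFun Y P)
    (hYm : ∀ i, Measurable (Y i)) (hY1 : ∀ i, ∫⁻ ω, Y i ω ∂P ≤ 1) (t : ℝ≥0∞) (N : ℕ) :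
    ∑ n ∈ range N, ∫⁻ ω in belowBefore Y t n ∩ {ω | t ≤ ∏ i ∈ range n, Y i ω},
        ∏ i ∈ range n, Y i ω ∂P
      + ∫⁻ ω in belowBefore Y t N, ∏ i ∈ range N, Y i ω ∂P ≤ 1 := by
  induction N with
  | zero => simp [belowBefore]
  | succ N ih =>
    have hhit : MeasurableSet {ω | t ≤ ∏ i ∈ range N, Y i ω} :=
      measurableSet_le measurable_const (Finset.measurable_prod _ fun i _ => hYm i)
    rw [sum_range_succ, add_assoc]
    refine le_trans (add_le_add le_rfl ?_) ih
    calc _ ≤ ∫⁻ ω in belowBefore Y t N ∩ {ω | t ≤ ∏ i ∈ range N, Y i ω}, ∏ i ∈ range N, Y i ω ∂P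
          + ∫⁻ ω in belowBefore Y t (N + 1), ∏ i ∈ range N, Y i ω ∂P :=
          add_le_add le_rfl (setLIntegral_prod_succ_le hY hYm hY1 t N)
      _ = ∫⁻ ω in belowBefore Y t N, ∏ i ∈ range N, Y i ω ∂P := by
          rw [belowBefore_succ, lintegral_inter_add_sdiff _ _ hhit]

theorem mul_measure_exists_le_prod_le [IsProbabilityMeasure P] (hY : iIndepFun Y P)
    (hYm : ∀ i, Measurable (Y i)) (hY1 : ∀ i, ∫⁻ ω, Y i ω ∂P ≤ 1) (t : ℝ≥0∞) :
    t * P {ω | ∃ n, t ≤ ∏ i ∈ range n, Y i ω} ≤ 1 := by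
  have hcover : {ω | ∃ n, t ≤ ∏ i ∈ range n, Y i ω}
      ⊆ ⋃ n, belowBefore Y t n ∩ {ω | t ≤ ∏ i ∈ range n, Y i ω} := by
    intro ω ⟨n, hn⟩
    classical
    have hex : ∃ n, t ≤ ∏ i ∈ range n, Y i ω := ⟨n, hn⟩
    exact Set.mem_iUnion.2 ⟨Nat.find hex,
      fun k hk => lt_of_not_ge (Nat.find_min hex hk), Nat.find_spec hex⟩
  calc t * P {ω | ∃ n, t ≤ ∏ i ∈ range n, Y i ω}
      ≤ t * ∑' n, P (belowBefore Y t n ∩ {ω | t ≤ ∏ i ∈ range n, Y i ω}) := by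
        gcongr
        exact (measure_mono hcover).trans (measure_iUnion_le _)
    _ = ∑' n, t * P (belowBefore Y t n ∩ {ω | t ≤ ∏ i ∈ range n, Y i ω}) :=
        ENNReal.tsum_mul_left.symm
    _ ≤ 1 := by
        refine ENNReal.tsum_le_of_sum_range_le fun N => le_trans ?_
          ((le_self_add).trans (sum_setLIntegral_firstHit_add_le hY hYm hY1 t N))
        gcongr with n
        rw [← setLIntegral_const]
        exact setLIntegral_mono (Finset.measurable_prod _ fun i _ => hYm i) fun ω hω => hω.2

end Ville

theorem measure_exists_le_exp_mul_sum_sub_le_inv {Ω : Type*} [MeasurableSpace Ω]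
    {P : Measure Ω} [IsProbabilityMeasure P] {X : ℕ → Ω → ℝ} (hXm : ∀ i, Measurable (X i))
    (hindep : iIndepFun X P) {b : ℝ} (hb : 0 < b) {σ : ℕ → ℝ}
    (hint : ∀ i, Integrable (X i) P) (hmean : ∀ i, ∫ ω, X i ω ∂P = 0)
    (hint2 : ∀ i, Integrable (fun ω => X i ω ^ 2) P) (hvar : ∀ i, ∫ ω, X i ω ^ 2 ∂P ≤ σ i ^ 2)
    (hbd : ∀ i, ∀ᵐ ω ∂P, X i ω ≤ b) {s c : ℝ} (hs : 0 < s) (hc : 0 < c) :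
    P {ω | ∃ n : ℕ, c ≤ exp (s * ∑ i ∈ range n, X i ω
        - n * log (bennettMGF b ((∑ i ∈ range n, σ i ^ 2) / n) s))}
      ≤ ENNReal.ofReal c⁻¹ := by
  set Y : ℕ → Ω → ℝ≥0∞ := fun i ω => ENNReal.ofReal (exp (s * X i ω) / bennettMGF b (σ i ^ 2) s)
  have hYm : ∀ i, Measurable (Y i) := fun i => by fun_prop
  have hY : iIndepFun Y P :=
    hindep.comp (fun i x => ENNReal.ofReal (exp (s * x) / bennettMGF b (σ i ^ 2) s)) fun i => by
      fun_prop
  have hY1 : ∀ i, ∫⁻ ω, Y i ω ∂P ≤ 1 := fun i =>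
    lintegral_ofReal_exp_mul_div_bennettMGF_le_one (hint i) (hmean i) (hint2 i) (hvar i) hb
      (hbd i) hs
  have hsub : {ω | ∃ n : ℕ, c ≤ exp (s * ∑ i ∈ range n, X i ω
        - n * log (bennettMGF b ((∑ i ∈ range n, σ i ^ 2) / n) s))}
      ⊆ {ω | ∃ n, ENNReal.ofReal c ≤ ∏ i ∈ range n, Y i ω} := by
    rintro ω ⟨n, hn⟩
    refine ⟨n, ?_⟩
    rw [← ENNReal.ofReal_prod_of_nonneg fun i _ =>
      div_nonneg (exp_pos _).le (bennettMGF_pos hb (sq_nonneg _) s).le]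
    exact ENNReal.ofReal_le_ofReal (hn.trans (exp_mul_sum_sub_le_prod_div hb hs σ (X · ω) n))
  rw [ENNReal.ofReal_inv_of_pos hc, ENNReal.le_inv_iff_mul_le, mul_comm]
  exact (mul_le_mul_right (measure_mono hsub) _).trans (mul_measure_exists_le_prod_le hY hYm hY1 _)

theorem statement10_general {Ω : Type*} [MeasurableSpace Ω] (P : Measure Ω) [IsProbabilityMeasure P]
    (X : ℕ → Ω → ℝ) (hXm : ∀ i, Measurable (X i))
    (hindep : iIndepFun X P)
    (b : ℝ) (hb : 0 < b) (σ : ℕ → ℝ)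
    (hint : ∀ i, Integrable (X i) P)
    (hmean : ∀ i, (∫ ω, X i ω ∂P) = 0)
    (hint2 : ∀ i, Integrable (fun ω => (X i ω) ^ 2) P)
    (hvar : ∀ i, (∫ ω, (X i ω) ^ 2 ∂P) ≤ (σ i) ^ 2)
    (hbd : ∀ i, ∀ᵐ ω ∂P, X i ω ≤ b)
    (ν : ℕ → ℝ) (hν : ∀ n, ν n = (∑ i ∈ Finset.range n, (σ i) ^ 2) / n)
    (V : ℝ → ℕ → ℝ)
    (hV : ∀ s n, V s n = n * Real.log
      (b ^ 2 / (b ^ 2 + ν n) * Real.exp (-(ν n / b) * s)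
        + ν n / (b ^ 2 + ν n) * Real.exp (b * s)))
    (m : ℕ) (hνm : 0 < ν m)
    (ε : ℝ) (hε : 0 < ε) (hεb : ε < b)
    (ζ : ℝ) (hζ : ζ = b / (b ^ 2 + ν m) * Real.log ((1 + ε * b / ν m) / (1 - ε / b))) :
    P {ω | ∃ n : ℕ, 1 ≤ n ∧
        0 ≤ ζ * ((∑ i ∈ Finset.range n, X i ω) - m * ε) - V ζ n + V ζ m}
      ≤ ENNReal.ofReal
        (((1 + b * ε / ν m) ^ (-((ν m + b * ε) / (b ^ 2 + ν m)))
          * (1 - ε / b) ^ (-((b ^ 2 - b * ε) / (b ^ 2 + ν m)))) ^ m) := by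
  have hq : 0 < 1 - ε / b := by rw [sub_pos, div_lt_one hb]; exact hεb
  have hζpos : 0 < ζ := by
    have : 0 < ε * b / ν m := by positivity
    have : 0 < ε / b := by positivity
    rw [hζ]
    exact mul_pos (by positivity) (log_pos ((one_lt_div hq).2 (by linarith)))
  have hVF : ∀ n, V ζ n = n * log (bennettMGF b (ν n) ζ) := fun n => hV ζ n
  calc _ ≤ P {ω | ∃ n : ℕ, exp (ζ * (m * ε) - V ζ m) ≤ exp (ζ * ∑ i ∈ range n, X i ω
        - n * log (bennettMGF b ((∑ i ∈ range n, σ i ^ 2) / n) ζ))} := by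
        refine measure_mono fun ω ⟨n, _, hn⟩ => ⟨n, exp_le_exp.2 ?_⟩
        rw [← hν n, ← hVF]
        linarith [mul_sub ζ (∑ i ∈ range n, X i ω) (m * ε)]
    _ ≤ ENNReal.ofReal (exp (ζ * (m * ε) - V ζ m))⁻¹ :=
        measure_exists_le_exp_mul_sum_sub_le_inv hXm hindep hb hint hmean hint2 hvar hbd hζpos
          (exp_pos _)
    _ = _ := by
        rw [← exp_neg, hVF, ← bennettMGF_mul_exp_neg_mul_eq hb hνm hε hεb hζ,
          show -(ζ * (m * ε) - m * log (bennettMGF b (ν m) ζ))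
            = m * (log (bennettMGF b (ν m) ζ) + -(ζ * ε)) by ring,
          exp_nat_mul, exp_add, exp_log (bennettMGF_pos hb hνm.le ζ)]

/-- Uniform Bennett/Hoeffding-type inequality for independent zero-mean random variables
bounded above by `b` with second moments at most `σᵢ²`: with `νₙ = (1/n) ∑_{i≤n} σᵢ²`,
`𝒱(s,n) = n log (b²/(b²+νₙ) exp(-(νₙ/b)s) + νₙ/(b²+νₙ) exp(bs))` and
`ζ = b/(b²+νₘ) log ((1 + εb/νₘ)/(1 - ε/b))`, we have
`Pr{∃ n ≥ 1, ζ(Sₙ - mε) - 𝒱(ζ,n) + 𝒱(ζ,m) ≥ 0}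
  ≤ ((1 + bε/νₘ)^{-(νₘ+bε)/(b²+νₘ)} (1 - ε/b)^{-(b²-bε)/(b²+νₘ)})^m`. -/
theorem statement10 {Ω : Type*} [MeasurableSpace Ω] (P : Measure Ω) [IsProbabilityMeasure P]
    (X : ℕ → Ω → ℝ) (hXm : ∀ i, Measurable (X i))
    (hindep : iIndepFun X P)
    (b : ℝ) (hb : 0 < b) (σ : ℕ → ℝ)
    (hint : ∀ i, Integrable (X i) P)
    (hmean : ∀ i, (∫ ω, X i ω ∂P) = 0)
    (hint2 : ∀ i, Integrable (fun ω => (X i ω) ^ 2) P)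
    (hvar : ∀ i, (∫ ω, (X i ω) ^ 2 ∂P) ≤ (σ i) ^ 2)
    (hbd : ∀ i, ∀ᵐ ω ∂P, X i ω ≤ b)
    (ν : ℕ → ℝ) (hν : ∀ n, ν n = (∑ i ∈ Finset.range n, (σ i) ^ 2) / n)
    (V : ℝ → ℕ → ℝ)
    (hV : ∀ s n, V s n = n * Real.log
      (b ^ 2 / (b ^ 2 + ν n) * Real.exp (-(ν n / b) * s)
        + ν n / (b ^ 2 + ν n) * Real.exp (b * s)))
    (m : ℕ) (hm : 1 ≤ m) (hνm : 0 < ν m)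
    (ε : ℝ) (hε : 0 < ε) (hεb : ε < b)
    (ζ : ℝ) (hζ : ζ = b / (b ^ 2 + ν m) * Real.log ((1 + ε * b / ν m) / (1 - ε / b))) :
    P {ω | ∃ n : ℕ, 1 ≤ n ∧
        0 ≤ ζ * ((∑ i ∈ Finset.range n, X i ω) - m * ε) - V ζ n + V ζ m}
      ≤ ENNReal.ofReal
        (((1 + b * ε / ν m) ^ (-((ν m + b * ε) / (b ^ 2 + ν m)))
          * (1 - ε / b) ^ (-((b ^ 2 - b * ε) / (b ^ 2 + ν m)))) ^ m) :=
  statement10_general P X hXm hindep b hb σ hint hmean hint2 hvar hbd ν hν V hV m hνm ε hε hεb ζ hζ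
end

section
/- Let X₁, X₂, … be independent Poisson random variables with E[Xᵢ] = λᵢ > 0 for each i ∈ ℕ. Define Sₙ = Σ_{i=1}^{n} Xᵢ, λ̄ₙ = (1/n) Σ_{i=1}^{n} λᵢ, and 𝒱(s, n) = n λ̄ₙ (e^s − 1) for s ∈ ℝ, n ∈ ℕ. Then for every positive integer m and every θ ∈ (0, ∞), with ζ = ln(θ/λ̄ₘ): Pr{ ∃ n ∈ ℕ, ζ(Sₙ − m θ) − 𝒱(ζ, n) + 𝒱(ζ, m) ≥ 0 } ≤ [ exp( θ − λ̄ₘ + θ·ln(λ̄ₘ/θ) ) ]^m. -/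
/-!
The tilted variables `Zᵢ = exp (ζ Xᵢ) / E[exp (ζ Xᵢ)] = exp (ζ Xᵢ - λᵢ (exp ζ - 1))` are independent
with mean one, so their partial products `exp (ζ Sₙ - 𝒱(ζ, n))` form a nonnegative martingale.
The event in question is that this martingale ever reaches `a = exp (ζ m θ - 𝒱(ζ, m))`, which by
Ville's maximal inequality has probability at most `1 / a`; for `ζ = log (θ / λ̄ₘ)` one has
`𝒱(ζ, m) = m (θ - λ̄ₘ)`, and `1 / a` is the stated bound.
-/

open MeasureTheory ProbabilityTheory Real Finset
open scoped ENNReal NNReal Nat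

section Poisson

lemma hasSum_poissonMeasure_exp_mul (r : ℝ≥0) (z : ℝ) :
    HasSum (fun n : ℕ ↦ exp (-r) * r ^ n / n ! * exp (z * n)) (exp (r * (exp z - 1))) := by
  have h := (NormedSpace.expSeries_div_hasSum_exp ((r : ℝ) * exp z)).mul_left (exp (-r))
  rw [← exp_eq_exp_ℝ, ← exp_add, show -(r : ℝ) + r * exp z = r * (exp z - 1) by ring] at h
  refine h.congr_fun fun n ↦ ?_
  rw [mul_comm z, exp_nat_mul, mul_pow]
  ring

lemma integrable_exp_mul_poissonMeasure (r : ℝ≥0) (z : ℝ) :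
    Integrable (fun n : ℕ ↦ exp (z * n)) (poissonMeasure r) := by
  rw [integrable_poissonMeasure_iff]
  simpa only [norm_of_nonneg (exp_pos _).le] using (hasSum_poissonMeasure_exp_mul r z).summable

lemma integral_exp_mul_poissonMeasure (r : ℝ≥0) (z : ℝ) :
    ∫ n : ℕ, exp (z * n) ∂poissonMeasure r = exp (r * (exp z - 1)) := by
  rw [integral_poissonMeasure, ← (hasSum_poissonMeasure_exp_mul r z).tsum_eq]
  simp only [smul_eq_mul]

variable {Ω : Type*} [MeasurableSpace Ω] {P : Measure Ω} {X : Ω → ℕ} {r : ℝ≥0}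

lemma integrable_exp_mul_of_map_eq_poissonMeasure (hX : Measurable X)
    (hlaw : P.map X = poissonMeasure r) (z : ℝ) : Integrable (fun ω ↦ exp (z * X ω)) P := by
  have h := integrable_exp_mul_poissonMeasure r z
  rw [← hlaw] at h
  exact (integrable_map_measure .of_discrete hX.aemeasurable).mp h

lemma integral_exp_mul_of_map_eq_poissonMeasure (hX : Measurable X)
    (hlaw : P.map X = poissonMeasure r) (z : ℝ) :
    ∫ ω, exp (z * X ω) ∂P = exp (r * (exp z - 1)) := by
  rw [← integral_exp_mul_poissonMeasure r z, ← hlaw, integral_map hX.aemeasurable .of_discrete]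

end Poisson

namespace MeasureTheory

variable {Ω : Type*} [MeasurableSpace Ω] {μ : Measure Ω}

theorem Martingale.ville_ineq [IsFiniteMeasure μ] {𝒢 : Filtration ℕ ‹_›} {f : ℕ → Ω → ℝ}
    (hf : Martingale f 𝒢 μ) (hnonneg : 0 ≤ f) {ε : ℝ} (hε : 0 < ε) :
    μ {ω | ∃ n, ε ≤ f n ω} ≤ ENNReal.ofReal (μ[f 0] / ε) := by
  lift ε to ℝ≥0 using hε.le
  set A : ℕ → Set Ω :=
    fun N ↦ {ω | (ε : ℝ) ≤ (range (N + 1)).sup' nonempty_range_add_one fun k ↦ f k ω}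
  have hA : {ω | ∃ n, (ε : ℝ) ≤ f n ω} = ⋃ N, A N := by
    ext ω
    simp only [A, Set.mem_ofPred_eq, Set.mem_iUnion, le_sup'_iff, mem_range]
    exact ⟨fun ⟨n, hn⟩ ↦ ⟨n, n, n.lt_succ_self, hn⟩, fun ⟨_, k, _, hk⟩ ↦ ⟨k, hk⟩⟩
  have hmono : Monotone A := fun N M hNM ω (hω : (ε : ℝ) ≤ _) ↦
    show (ε : ℝ) ≤ _ from hω.trans (sup'_mono _ (range_subset_range.2 (Nat.succ_le_succ hNM)) _)
  have hbound : ∀ N, ε * μ (A N) ≤ ENNReal.ofReal μ[f 0] := fun N ↦ calc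
    ε * μ (A N) ≤ ENNReal.ofReal (∫ ω in A N, f N ω ∂μ) :=
      maximal_ineq hf.submartingale hnonneg N
    _ ≤ ENNReal.ofReal μ[f N] := ENNReal.ofReal_le_ofReal
      (setIntegral_le_integral (hf.integrable N) (ae_of_all _ (hnonneg N)))
    _ = ENNReal.ofReal μ[f 0] := by
      rw [← setIntegral_univ, ← hf.setIntegral_eq (Nat.zero_le N) MeasurableSet.univ,
        setIntegral_univ]
  rw [hA, hmono.measure_iUnion, ENNReal.ofReal_div_of_pos hε, ENNReal.ofReal_coe_nnreal,
    ENNReal.le_div_iff_mul_le (.inl (mod_cast hε.ne')) (.inl ENNReal.coe_ne_top), mul_comm,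
    ENNReal.mul_iSup]
  exact iSup_le hbound

end MeasureTheory

namespace ProbabilityTheory

variable {Ω : Type*} [MeasurableSpace Ω] {μ : Measure Ω} {Z : ℕ → Ω → ℝ}

lemma iIndepFun.integrable_prod_range (hindep : iIndepFun Z μ) (hmeas : ∀ i, Measurable (Z i))
    (hint : ∀ i, Integrable (Z i) μ) (n : ℕ) : Integrable (∏ i ∈ range n, Z i) μ := by
  induction n with
  | zero =>
    have := hindep.isProbabilityMeasure
    rw [range_zero, prod_empty]
    exact integrable_const 1
  | succ n ih =>
    rw [prod_range_succ]
    exact (hindep.indepFun_prod_range_succ hmeas n).integrable_mul ih (hint n)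

lemma iIndepFun.martingale_prod_range_succ (hindep : iIndepFun Z μ)
    (hmeas : ∀ i, Measurable (Z i)) (hint : ∀ i, Integrable (Z i) μ) (hmean : ∀ i, μ[Z i] = 1) :
    Martingale (fun n ↦ ∏ i ∈ range (n + 1), Z i)
      (Filtration.natural Z fun i ↦ (hmeas i).stronglyMeasurable) μ := by
  have := hindep.isProbabilityMeasure
  set 𝒢 := Filtration.natural Z fun i ↦ (hmeas i).stronglyMeasurable
  have hadapted : StronglyAdapted 𝒢 fun n ↦ ∏ i ∈ range (n + 1), Z i := fun n ↦
    stronglyMeasurable_prod _ fun i hi ↦ (Filtration.stronglyAdapted_natural _ i).mono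
      (𝒢.mono (Nat.lt_succ_iff.1 (mem_range.1 hi)))
  have hint_prod n := hindep.integrable_prod_range hmeas hint n
  refine martingale_nat hadapted (fun n ↦ hint_prod _) fun n ↦ ?_
  have hpull := condExp_mul_of_stronglyMeasurable_left (hadapted n)
    (by rw [← prod_range_succ]; exact hint_prod _) (hint (n + 1))
  have hfuture : μ[Z (n + 1) | 𝒢 n] =ᵐ[μ] fun _ ↦ μ[Z (n + 1)] :=
    hindep.condExp_natural_ae_eq_of_lt _ (Nat.lt_succ_self n)
  rw [prod_range_succ _ (n + 1)]
  filter_upwards [hpull, hfuture] with ω hpull hfuture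
  rw [hpull, Pi.mul_apply, hfuture, hmean, mul_one]

lemma iIndepFun.poisson_exp_ville_ineq {X : ℕ → Ω → ℕ} (hX : ∀ i, Measurable (X i))
    (hindep : iIndepFun X μ) {lam : ℕ → ℝ≥0} (hlaw : ∀ i, μ.map (X i) = poissonMeasure (lam i))
    (z : ℝ) {a : ℝ} (ha : 0 < a) :
    μ {ω | ∃ n, a ≤ exp (z * ∑ i ∈ range (n + 1), (X i ω : ℝ) -
      (∑ i ∈ range (n + 1), (lam i : ℝ)) * (exp z - 1))} ≤ ENNReal.ofReal (1 / a) := by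
  have := hindep.isProbabilityMeasure
  set Z : ℕ → Ω → ℝ := fun i ω ↦ exp (z * X i ω) / exp (lam i * (exp z - 1))
  have hZ_meas i : Measurable (Z i) :=
    (measurable_of_countable fun n : ℕ ↦ exp (z * n) / exp (lam i * (exp z - 1))).comp (hX i)
  have hZ_int i : Integrable (Z i) μ :=
    (integrable_exp_mul_of_map_eq_poissonMeasure (hX i) (hlaw i) z).div_const _
  have hZ_mean i : μ[Z i] = 1 := by
    rw [integral_div, integral_exp_mul_of_map_eq_poissonMeasure (hX i) (hlaw i),
      div_self (exp_pos _).ne']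
  have hZ_indep : iIndepFun Z μ :=
    hindep.comp (fun i n ↦ exp (z * n) / exp (lam i * (exp z - 1))) fun _ ↦ .of_discrete
  have hprod n ω : (∏ i ∈ range n, Z i) ω =
      exp (z * ∑ i ∈ range n, (X i ω : ℝ) - (∑ i ∈ range n, (lam i : ℝ)) * (exp z - 1)) := by
    rw [prod_apply, prod_div_distrib, ← exp_sum, ← exp_sum, ← exp_sub, mul_sum, sum_mul]
  have hnonneg : (0 : ℕ → Ω → ℝ) ≤ fun n ↦ ∏ i ∈ range (n + 1), Z i := fun n ω ↦ by
    simp only [Pi.zero_apply, hprod]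
    positivity
  have hville :=
    (hZ_indep.martingale_prod_range_succ hZ_meas hZ_int hZ_mean).ville_ineq hnonneg ha
  simpa only [← hprod, zero_add, prod_range_one, hZ_mean] using hville

end ProbabilityTheory

/-- Uniform inequality for sums of independent Poisson random variables with rates
`λᵢ > 0`: with `λ̄ₙ` the averaged rate, `𝒱(s,n) = n λ̄ₙ (eˢ - 1)` and `ζ = log (θ/λ̄ₘ)`,
`Pr{∃ n ≥ 1, ζ(Sₙ - mθ) - 𝒱(ζ,n) + 𝒱(ζ,m) ≥ 0}
  ≤ (exp (θ - λ̄ₘ + θ log (λ̄ₘ/θ)))^m`. -/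
theorem statement12 {Ω : Type*} [MeasurableSpace Ω] (P : Measure Ω) [IsProbabilityMeasure P]
    (X : ℕ → Ω → ℕ) (hXm : ∀ i, Measurable (X i))
    (hindep : iIndepFun X P)
    (lam : ℕ → NNReal) (hlam : ∀ i, 0 < lam i)
    (hdist : ∀ i, Measure.map (X i) P = poissonMeasure (lam i))
    (lambar : ℕ → ℝ) (hlambar : ∀ n, lambar n = (∑ i ∈ Finset.range n, (lam i : ℝ)) / n)
    (V : ℝ → ℕ → ℝ)
    (hV : ∀ s n, V s n = n * lambar n * (Real.exp s - 1))
    (m : ℕ) (hm : 1 ≤ m) (θ : ℝ) (hθ : 0 < θ)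
    (ζ : ℝ) (hζ : ζ = Real.log (θ / lambar m)) :
    P {ω | ∃ n : ℕ, 1 ≤ n ∧
        0 ≤ ζ * ((∑ i ∈ Finset.range n, (X i ω : ℝ)) - m * θ) - V ζ n + V ζ m}
      ≤ ENNReal.ofReal
        ((Real.exp (θ - lambar m + θ * Real.log (lambar m / θ))) ^ m) := by
  have hlambar_pos : 0 < lambar m := by
    rw [hlambar]
    exact div_pos (sum_pos (fun i _ ↦ mod_cast hlam i) ⟨0, mem_range.2 hm⟩) (mod_cast hm)
  have hV_sum n : V ζ n = (∑ i ∈ range n, (lam i : ℝ)) * (exp ζ - 1) := by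
    rcases n.eq_zero_or_pos with rfl | hn
    · simp [hV]
    · rw [hV, hlambar, mul_div_cancel₀ _ (by positivity)]
  set a := exp (ζ * (m * θ) - V ζ m)
  have hevent : {ω | ∃ n : ℕ, 1 ≤ n ∧
      0 ≤ ζ * ((∑ i ∈ range n, (X i ω : ℝ)) - m * θ) - V ζ n + V ζ m} ⊆
      {ω | ∃ n, a ≤ exp (ζ * ∑ i ∈ range (n + 1), (X i ω : ℝ) -
        (∑ i ∈ range (n + 1), (lam i : ℝ)) * (exp ζ - 1))} := by
    rintro ω ⟨n, hn, hω⟩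
    refine ⟨n - 1, ?_⟩
    rw [Nat.sub_add_cancel hn, ← hV_sum, exp_le_exp]
    linarith
  have hthreshold : 1 / a = exp (θ - lambar m + θ * log (lambar m / θ)) ^ m := by
    have hζ_exp : exp ζ = θ / lambar m := by rw [hζ, exp_log (div_pos hθ hlambar_pos)]
    have hζ_log : ζ = -log (lambar m / θ) := by rw [hζ, ← log_inv, inv_div]
    rw [one_div, ← exp_neg, ← exp_nat_mul, hV, hζ_exp, hζ_log]
    field_simp
    ring_nf
  calc _ ≤ _ := measure_mono hevent
    _ ≤ ENNReal.ofReal (1 / a) := hindep.poisson_exp_ville_ineq hXm hdist ζ (exp_pos _)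
    _ = _ := by rw [hthreshold]
end
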